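/- arXiv:math/0701775 — 2 statements merged into one kernel-verified Lean document; each statement's English description precedes it below -/
import Mathlib

section
/- For every δ > 0 there is a constant C = C(δ) > 0 with the following property. Let φ₀ : ℝ → ℝ be a C², even function supported in [−1,1], let φ̃₀(λ) = λφ₀(λ), and for t ≥ 0, r > 0 set Φ(t,r) = (1/(2r)) ∫_{t−r}^{t+r} φ̃₀''(λ) dλ. Then for every T > 0: ∫₀^T [ (1+t)^δ · sup_{0 < r ≤ t/4 + 1} |Φ(t,r)| ]² dt ≤ C ∫₀^∞ λ² |φ₀''(λ)|² dλ. -/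
open MeasureTheory Real Set Metric Function
open scoped ENNReal

noncomputable section

/-- `Φ(t,r) = (1/(2r)) ∫_{t-r}^{t+r} φ̃₀''(λ) dλ` where `φ̃₀(λ) = λ φ₀(λ)`. -/
def Phi (φ₀ : ℝ → ℝ) (t r : ℝ) : ℝ :=
  (1/(2*r)) * ∫ l in (t - r)..(t + r), deriv (deriv (fun s => s * φ₀ s)) l

/-- Covering weak-type lemma: if every point of `E` carries a ball of radius `≤ 4` on which
`ν` is at least `c` times the Lebesgue size of the ball, then `c * vol E ≤ 4 * ν univ`. -/
theorem vitali_weak (ν : Measure ℝ) (c : ℝ≥0∞) (E : Set ℝ)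
    (hE : ∀ x ∈ E, ∃ r : ℝ, 0 < r ∧ r ≤ 4 ∧ c * ENNReal.ofReal (2*r) ≤ ν (closedBall x r)) :
    c * volume E ≤ 4 * ν univ := by
  classical
  -- choose radii
  choose! r hr0 hr4 hrν using hE
  obtain ⟨u, huE, hdisj, hcov⟩ := Vitali.exists_disjoint_subfamily_covering_enlargement_closedBall
    E id r 4 (fun a ha => hr4 a ha) 4 (by norm_num)
  simp only [id_eq] at hdisj hcov
  -- countability of u
  have hucount : u.Countable := by
    apply hdisj.countable_of_nonempty_interior
    intro a ha
    show (interior (closedBall a (r a))).Nonempty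
    rw [interior_closedBall _ (ne_of_gt (hr0 a (huE ha)))]
    exact ⟨a, mem_ball_self (hr0 a (huE ha))⟩
  haveI : Countable u := hucount.to_subtype
  -- E covered by 4-enlarged balls
  have hcover : E ⊆ ⋃ b ∈ u, closedBall b (4 * r b) := by
    intro a ha
    obtain ⟨b, hb, hsub⟩ := hcov a ha
    exact Set.mem_biUnion hb (hsub (mem_closedBall_self (hr0 a ha).le))
  have h1 : volume E ≤ ∑' b : u, volume (closedBall (b : ℝ) (4 * r b)) :=
    (measure_mono hcover).trans (measure_biUnion_le volume hucount _)
  have h2 : c * volume E ≤ ∑' b : u, c * volume (closedBall (b : ℝ) (4 * r b)) := by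
    calc c * volume E ≤ c * ∑' b : u, volume (closedBall (b : ℝ) (4 * r b)) :=
          mul_le_mul_right h1 c
      _ = _ := ENNReal.tsum_mul_left.symm
  have h3 : ∀ b : u, c * volume (closedBall (b : ℝ) (4 * r b))
      ≤ 4 * ν (closedBall (b : ℝ) (r b)) := by
    intro b
    have hb0 : 0 < r b := hr0 b (huE b.2)
    rw [Real.volume_closedBall]
    have : ENNReal.ofReal (2 * (4 * r b)) = 4 * ENNReal.ofReal (2 * r b) := by
      rw [← ENNReal.ofReal_ofNat, ← ENNReal.ofReal_mul (by norm_num)]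
      ring_nf
    rw [this, ← mul_assoc, mul_comm c 4, mul_assoc]
    exact mul_le_mul_right (hrν b (huE b.2)) 4
  calc c * volume E ≤ ∑' b : u, c * volume (closedBall (b : ℝ) (4 * r b)) := h2
    _ ≤ ∑' b : u, 4 * ν (closedBall (b : ℝ) (r b)) := ENNReal.tsum_le_tsum h3
    _ = 4 * ∑' b : u, ν (closedBall (b : ℝ) (r b)) := ENNReal.tsum_mul_left
    _ = 4 * ν (⋃ b ∈ u, closedBall (b : ℝ) (r b)) := by
        rw [measure_biUnion hucount hdisj (fun b _ => measurableSet_closedBall)]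
    _ ≤ 4 * ν univ := mul_le_mul_right (measure_mono (subset_univ _)) 4

/-- Index type: positive rationals at most 4. -/
def QI : Type := {q : ℚ // 0 < (q:ℝ) ∧ (q:ℝ) ≤ 4}

instance : Countable QI := Subtype.countable

/-- Average of `H` over `Ioc (x-q) (x+q)`. -/
def mavg (H : ℝ → ℝ≥0∞) (q x : ℝ) : ℝ≥0∞ :=
  (∫⁻ u in Ioc (x - q) (x + q), H u) / ENNReal.ofReal (2*q)

/-- Restricted Hardy–Littlewood maximal function over rational radii `≤ 4`. -/
def mfn (H : ℝ → ℝ≥0∞) (x : ℝ) : ℝ≥0∞ := ⨆ q : QI, mavg H (q.1 : ℝ) x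

theorem mavg_le {H : ℝ → ℝ≥0∞} {B : ℝ≥0∞} (hHB : ∀ u, H u ≤ B) {q : ℝ} (hq : 0 < q)
    (x : ℝ) : mavg H q x ≤ B := by
  have h1 : (∫⁻ u in Ioc (x - q) (x + q), H u) ≤ B * ENNReal.ofReal (2*q) := by
    calc (∫⁻ u in Ioc (x - q) (x + q), H u) ≤ ∫⁻ _ in Ioc (x - q) (x + q), B :=
          lintegral_mono fun u => hHB u
      _ = B * volume (Ioc (x - q) (x + q)) := by rw [setLIntegral_const]
      _ = B * ENNReal.ofReal (2*q) := by rw [Real.volume_Ioc]; ring_nf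
  rw [mavg, ENNReal.div_le_iff_le_mul]
  · exact h1
  · left; simp [ENNReal.ofReal_pos]; linarith
  · left; exact ENNReal.ofReal_ne_top

theorem mfn_le {H : ℝ → ℝ≥0∞} {B : ℝ≥0∞} (hHB : ∀ u, H u ≤ B) (x : ℝ) : mfn H x ≤ B :=
  iSup_le fun q => mavg_le hHB q.2.1 x

theorem measurable_mavg {H : ℝ → ℝ≥0∞} (hH : Measurable H) (hfin : ∫⁻ u, H u ≠ ⊤)
    {q : ℝ} (hq : 0 < q) : Measurable (fun x => mavg H q x) := by
  set ν := volume.withDensity H with hν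
  haveI : IsFiniteMeasure ν := isFiniteMeasure_withDensity hfin
  have hF : Measurable (fun y => ν (Iic y)) := by
    apply Monotone.measurable
    intro a b hab
    exact measure_mono (Iic_subset_Iic.2 hab)
  have hrepr : (fun x => mavg H q x)
      = fun x => (ν (Iic (x + q)) - ν (Iic (x - q))) / ENNReal.ofReal (2*q) := by
    funext x
    rw [mavg, ← withDensity_apply H measurableSet_Ioc, ← Set.Iic_sdiff_Iic,
      measure_diff (Iic_subset_Iic.2 (by linarith)) measurableSet_Iic.nullMeasurableSet
        (measure_ne_top ν _)]
  rw [hrepr]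
  exact ((hF.comp (measurable_id.add_const q)).sub
    (hF.comp (measurable_id.sub_const q))).div_const _

theorem measurable_mfn {H : ℝ → ℝ≥0∞} (hH : Measurable H) (hfin : ∫⁻ u, H u ≠ ⊤) :
    Measurable (mfn H) :=
  Measurable.iSup fun q => measurable_mavg hH hfin q.2.1

theorem maximal_L2 (H : ℝ → ℝ≥0∞) (hH : Measurable H) (B : ℝ≥0∞) (hB : B ≠ ⊤)
    (hHB : ∀ u, H u ≤ B) (hfin : ∫⁻ u, H u ≠ ⊤) :
    ∫⁻ x, (mfn H x)^2 ≤ 64 * ∫⁻ x, (H x)^2 := by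
  classical
  set p : ℝ → ℝ := fun x => (mfn H x).toReal with hp
  have hmfn_top : ∀ x, mfn H x ≠ ⊤ := fun x => ((mfn_le hHB x).trans_lt hB.lt_top).ne
  have hp_meas : Measurable p := (measurable_mfn hH hfin).ennreal_toReal
  -- truncations
  set Htr : ℝ → ℝ → ℝ≥0∞ := fun t u => if ENNReal.ofReal t / 2 < H u then H u else 0 with hHtr
  have hHtr_meas : ∀ t, Measurable (Htr t) := fun t =>
    Measurable.ite (hH measurableSet_Ioi) hH measurable_const
  -- key weak-type estimate
  have key : ∀ t : ℝ, 0 < t →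
      volume {a | t ≤ p a} * ENNReal.ofReal (2*t) ≤ 32 * ∫⁻ u, Htr t u := by
    intro t ht
    set T := ENNReal.ofReal t with hT
    have hT0 : T ≠ 0 := (ENNReal.ofReal_pos.2 ht).ne'
    have hTtop : T ≠ ⊤ := ENNReal.ofReal_ne_top
    set H₁ : ℝ → ℝ≥0∞ := fun u => if T / 2 < H u then 0 else H u with hH₁
    have hsum : ∀ u, H u = H₁ u + Htr t u := by
      intro u; by_cases h : T / 2 < H u <;> simp [hH₁, hHtr, ← hT, h]
    have hH₁_meas : Measurable H₁ := Measurable.ite (hH measurableSet_Ioi) measurable_const hH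
    have hH₁_le : ∀ u, H₁ u ≤ T / 2 := by
      intro u; by_cases h : T / 2 < H u <;> simp [hH₁, h]
      · exact le_of_not_gt h
    -- split of the maximal function
    have hsplit : ∀ x, mfn H x ≤ T / 2 + mfn (Htr t) x := by
      intro x
      apply iSup_le
      intro q
      have havg : mavg H (q.1 : ℝ) x = mavg H₁ (q.1 : ℝ) x + mavg (Htr t) (q.1 : ℝ) x := by
        rw [mavg, mavg, mavg, ← ENNReal.add_div, ← lintegral_add_left hH₁_meas]
        congr 1
        exact lintegral_congr fun u => by rw [← hsum u]
      rw [havg]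
      exact add_le_add (mavg_le hH₁_le q.2.1 x) (le_iSup (fun q : QI => mavg (Htr t) (q.1:ℝ) x) q)
    set E := {x | T / 2 ≤ mfn (Htr t) x} with hE
    have hsub : {a | t ≤ p a} ⊆ E := by
      intro a ha
      have hTa : T ≤ mfn H a := by
        have := ENNReal.ofReal_le_ofReal (ha : t ≤ p a)
        rwa [hp, ENNReal.ofReal_toReal (hmfn_top a)] at this
      by_contra hcon
      have hlt : mfn (Htr t) a < T / 2 := lt_of_not_ge hcon
      have : mfn H a < T := by
        calc mfn H a ≤ T / 2 + mfn (Htr t) a := hsplit a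
          _ < T / 2 + T / 2 := ENNReal.add_lt_add_left (by simp [ENNReal.div_eq_top, hTtop]) hlt
          _ = T := ENNReal.add_halves T
      exact absurd hTa this.not_ge
    set ν := volume.withDensity (Htr t) with hν
    have hT42 : T / 4 < T / 2 := by
      rw [hT, show (4:ℝ≥0∞) = ENNReal.ofReal (4:ℝ) by norm_num,
        show (2:ℝ≥0∞) = ENNReal.ofReal (2:ℝ) by norm_num,
        ← ENNReal.ofReal_div_of_pos (by norm_num), ← ENNReal.ofReal_div_of_pos (by norm_num)]
      exact ENNReal.ofReal_lt_ofReal_iff_of_nonneg (by positivity) |>.2 (by linarith)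
    have hcover : ∀ x ∈ E, ∃ r : ℝ, 0 < r ∧ r ≤ 4 ∧
        (T/4) * ENNReal.ofReal (2*r) ≤ ν (closedBall x r) := by
      intro x hx
      have hlt : T / 4 < mfn (Htr t) x := hT42.trans_le hx
      obtain ⟨q, hq⟩ := lt_iSup_iff.1 hlt
      refine ⟨(q.1 : ℝ), q.2.1, q.2.2, ?_⟩
      have h1 : (T/4) * ENNReal.ofReal (2*(q.1:ℝ)) ≤ ∫⁻ u in Ioc (x - q.1) (x + q.1), Htr t u :=
        (ENNReal.mul_lt_of_lt_div hq).le
      refine h1.trans ?_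
      rw [hν, withDensity_apply _ measurableSet_closedBall]
      apply lintegral_mono_set
      rw [Real.closedBall_eq_Icc]
      exact Ioc_subset_Icc_self
    have hvit := vitali_weak ν (T/4) E hcover
    have hνuniv : ν univ = ∫⁻ u, Htr t u := by
      rw [hν, withDensity_apply _ MeasurableSet.univ, Measure.restrict_univ]
    have hTE : T * volume E ≤ 16 * ∫⁻ u, Htr t u := by
      calc T * volume E = 4 * ((T/4) * volume E) := by
            rw [← mul_assoc, mul_comm (4:ℝ≥0∞) (T/4), ENNReal.div_mul_cancel (by norm_num) (by norm_num)]
        _ ≤ 4 * (4 * ν univ) := mul_le_mul_right hvit 4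
        _ = 16 * ∫⁻ u, Htr t u := by rw [hνuniv, ← mul_assoc]; norm_num
    calc volume {a | t ≤ p a} * ENNReal.ofReal (2*t)
        = 2 * (T * volume {a | t ≤ p a}) := by
          rw [ENNReal.ofReal_mul (by norm_num), show ENNReal.ofReal (2:ℝ) = 2 by norm_num, ← hT]
          ring
      _ ≤ 2 * (T * volume E) := by
          exact mul_le_mul_right (mul_le_mul_right (measure_mono hsub) T) 2
      _ ≤ 2 * (16 * ∫⁻ u, Htr t u) := mul_le_mul_right hTE 2
      _ = 32 * ∫⁻ u, Htr t u := by rw [← mul_assoc]; norm_num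
  -- layer cake
  have hg_int : ∀ t : ℝ, t > 0 → IntervalIntegrable (fun s : ℝ => 2*s) volume 0 t :=
    fun t _ => (continuous_const.mul continuous_id).intervalIntegrable 0 t
  have lc := lintegral_comp_eq_lintegral_meas_le_mul (volume : Measure ℝ) (f := p)
    (g := fun s : ℝ => 2*s) (ae_of_all _ fun x => ENNReal.toReal_nonneg)
    hp_meas.aemeasurable hg_int
    ((ae_restrict_iff' measurableSet_Ioi).2 (ae_of_all _ fun t ht => by
      have h0 : (0:ℝ) < t := ht
      show (0:ℝ) ≤ 2 * t
      linarith))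
  have hlhs : ∀ x, (mfn H x)^2 = ENNReal.ofReal (∫ s in (0:ℝ)..p x, 2*s) := by
    intro x
    have : (∫ s in (0:ℝ)..p x, 2*s) = p x ^ 2 := by
      rw [intervalIntegral.integral_const_mul, integral_id]; ring
    rw [this, ← ENNReal.ofReal_toReal (hmfn_top x), ← ENNReal.ofReal_pow ENNReal.toReal_nonneg]
  -- joint measurability of the truncation
  have hjoint : Measurable (fun z : ℝ × ℝ => Htr z.1 z.2) := by
    apply Measurable.ite _ (hH.comp measurable_snd) measurable_const
    exact measurableSet_lt ((measurable_fst.ennreal_ofReal).div_const 2) (hH.comp measurable_snd)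
  have hinner_meas : Measurable (fun t => ∫⁻ u, Htr t u) :=
    Measurable.lintegral_prod_right hjoint
  calc ∫⁻ x, (mfn H x)^2 = ∫⁻ x, ENNReal.ofReal (∫ s in (0:ℝ)..p x, 2*s) :=
        lintegral_congr hlhs
    _ = ∫⁻ t in Ioi 0, volume {a | t ≤ p a} * ENNReal.ofReal (2*t) := lc
    _ ≤ ∫⁻ t in Ioi 0, 32 * ∫⁻ u, Htr t u := by
        apply setLIntegral_mono (by fun_prop)
        intro t ht
        exact key t ht
    _ = 32 * ∫⁻ t in Ioi 0, ∫⁻ u, Htr t u := lintegral_const_mul 32 hinner_meas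
    _ = 32 * ∫⁻ u, ∫⁻ t in Ioi 0, Htr t u := by
        congr 1
        exact lintegral_lintegral_swap hjoint.aemeasurable
    _ ≤ 32 * ∫⁻ u, 2 * (H u)^2 := by
        apply mul_le_mul_right
        apply lintegral_mono
        intro u
        have hHu_top : H u ≠ ⊤ := ((hHB u).trans_lt hB.lt_top).ne
        have hptw : ∀ᵐ s ∂(volume.restrict (Ioi (0:ℝ))), Htr s u ≤
            (Ioc (0:ℝ) (2 * (H u).toReal)).indicator (fun _ => H u) s := by
          refine (ae_restrict_iff' measurableSet_Ioi).2 (ae_of_all _ fun s hs => ?_)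
          by_cases h : ENNReal.ofReal s / 2 < H u
          · have hs2 : s / 2 < (H u).toReal := by
              rw [← ENNReal.ofReal_lt_iff_lt_toReal (by have h0 : (0:ℝ) < s := hs; linarith) hHu_top,
                ENNReal.ofReal_div_of_pos (by norm_num)]
              simpa using h
            have hmem : s ∈ Ioc (0:ℝ) (2 * (H u).toReal) := ⟨hs, by linarith⟩
            simp [hHtr, h, Set.indicator_of_mem hmem]
          · simp [hHtr, h]
        calc (∫⁻ s in Ioi (0:ℝ), Htr s u)
            ≤ ∫⁻ s in Ioi (0:ℝ), (Ioc (0:ℝ) (2 * (H u).toReal)).indicator (fun _ => H u) s :=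
              lintegral_mono_ae hptw
          _ ≤ ∫⁻ s, (Ioc (0:ℝ) (2 * (H u).toReal)).indicator (fun _ => H u) s :=
              setLIntegral_le_lintegral _ _
          _ = H u * volume (Ioc (0:ℝ) (2 * (H u).toReal)) := by
              rw [lintegral_indicator measurableSet_Ioc, setLIntegral_const]
          _ ≤ 2 * (H u)^2 := by
              rw [Real.volume_Ioc]
              have : ENNReal.ofReal (2 * (H u).toReal - 0) ≤ 2 * H u := by
                rw [sub_zero, ENNReal.ofReal_mul (by norm_num),
                  ENNReal.ofReal_toReal hHu_top]
                norm_num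
              calc H u * ENNReal.ofReal (2 * (H u).toReal - 0) ≤ H u * (2 * H u) :=
                    mul_le_mul_right this _
                _ = 2 * (H u)^2 := by ring
    _ = 64 * ∫⁻ u, (H u)^2 := by
        rw [lintegral_const_mul 2 (hH.pow_const 2), ← mul_assoc]
        norm_num

section PDE

variable {φ₀ : ℝ → ℝ}

theorem g_formula (hφ : ContDiff ℝ 2 φ₀) :
    deriv (deriv (fun s => s * φ₀ s)) =
      fun s => 2 * deriv φ₀ s + s * deriv (deriv φ₀) s := by
  have hd1 : Differentiable ℝ φ₀ := hφ.differentiable (by norm_num)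
  have hφ' : ContDiff ℝ 1 (deriv φ₀) := by
    have h2 : ContDiff ℝ ((1:ℕ) + 1) φ₀ := by exact_mod_cast hφ
    exact (contDiff_succ_iff_deriv.mp h2).2.2
  have hd2 : Differentiable ℝ (deriv φ₀) := hφ'.differentiable one_ne_zero
  have step1 : deriv (fun s => s * φ₀ s) = fun s => φ₀ s + s * deriv φ₀ s := by
    funext x
    have h : HasDerivAt (fun s => s * φ₀ s) (1 * φ₀ x + x * deriv φ₀ x) x :=
      (hasDerivAt_id x).mul (hd1 x).hasDerivAt
    simpa using h.deriv
  rw [step1]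
  funext x
  have h : HasDerivAt (fun s => φ₀ s + s * deriv φ₀ s)
      (deriv φ₀ x + (1 * deriv φ₀ x + x * deriv (deriv φ₀) x)) x :=
    ((hd1 x).hasDerivAt).add ((hasDerivAt_id x).mul (hd2 x).hasDerivAt)
  have h' : HasDerivAt (fun s => φ₀ s + s * deriv φ₀ s)
      (deriv φ₀ x + (1 * deriv φ₀ x + x * deriv (deriv φ₀) x)) x := by simpa using h
  rw [h'.deriv]; ring

theorem support_in_Icc (hsupp : support φ₀ ⊆ Icc (-1) 1) :
    (∀ x, x ∉ Icc (-1:ℝ) 1 → deriv φ₀ x = 0) ∧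
    (∀ x, x ∉ Icc (-1:ℝ) 1 → deriv (deriv φ₀) x = 0) ∧
    (∀ x, x ∉ Icc (-1:ℝ) 1 → deriv (deriv (fun s => s * φ₀ s)) x = 0) := by
  have hts0 : tsupport φ₀ ⊆ Icc (-1) 1 := closure_minimal hsupp isClosed_Icc
  have hs1 : support (deriv φ₀) ⊆ Icc (-1) 1 := support_deriv_subset.trans hts0
  have hts1 : tsupport (deriv φ₀) ⊆ Icc (-1) 1 := closure_minimal hs1 isClosed_Icc
  have hs2 : support (deriv (deriv φ₀)) ⊆ Icc (-1) 1 := support_deriv_subset.trans hts1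
  have hk : support (fun s => s * φ₀ s) ⊆ Icc (-1) 1 := by
    intro x hx
    apply hsupp
    simp only [mem_support] at hx ⊢
    exact fun h => hx (by rw [h, mul_zero])
  have htsk : tsupport (fun s => s * φ₀ s) ⊆ Icc (-1) 1 := closure_minimal hk isClosed_Icc
  have hk1 : support (deriv (fun s => s * φ₀ s)) ⊆ Icc (-1) 1 :=
    support_deriv_subset.trans htsk
  have htsk1 : tsupport (deriv (fun s => s * φ₀ s)) ⊆ Icc (-1) 1 :=
    closure_minimal hk1 isClosed_Icc
  have hk2 : support (deriv (deriv (fun s => s * φ₀ s))) ⊆ Icc (-1) 1 :=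
    support_deriv_subset.trans htsk1
  refine ⟨fun x hx => ?_, fun x hx => ?_, fun x hx => ?_⟩
  · by_contra h; exact hx (hs1 h)
  · by_contra h; exact hx (hs2 h)
  · by_contra h; exact hx (hk2 h)

theorem g_continuous (hφ : ContDiff ℝ 2 φ₀) :
    Continuous (deriv (deriv (fun s => s * φ₀ s))) := by
  have hk : ContDiff ℝ 2 (fun s : ℝ => s * φ₀ s) := contDiff_id.mul hφ
  have h2 : ContDiff ℝ ((1:ℕ) + 1) (fun s : ℝ => s * φ₀ s) := by exact_mod_cast hk
  have hk1 : ContDiff ℝ 1 (deriv (fun s : ℝ => s * φ₀ s)) := (contDiff_succ_iff_deriv.mp h2).2.2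
  exact hk1.continuous_deriv le_rfl

theorem g_odd (hφ : ContDiff ℝ 2 φ₀) (heven : ∀ x, φ₀ (-x) = φ₀ x) :
    ∀ x, deriv (deriv (fun s => s * φ₀ s)) (-x) = - deriv (deriv (fun s => s * φ₀ s)) x := by
  have hf1_odd : ∀ x, deriv φ₀ (-x) = - deriv φ₀ x := by
    intro x
    have h1 : deriv (fun y => φ₀ (-y)) x = - deriv φ₀ (-x) := deriv_comp_neg φ₀ x
    have h2 : (fun y => φ₀ (-y)) = φ₀ := funext heven
    rw [h2] at h1
    linarith
  have hf2_even : ∀ x, deriv (deriv φ₀) (-x) = deriv (deriv φ₀) x := by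
    intro x
    have h1 : deriv (fun y => deriv φ₀ (-y)) x = - deriv (deriv φ₀) (-x) :=
      deriv_comp_neg (deriv φ₀) x
    have h2 : (fun y => deriv φ₀ (-y)) = fun y => - deriv φ₀ y := funext hf1_odd
    rw [h2, deriv.fun_neg] at h1
    linarith
  intro x
  rw [g_formula hφ]
  simp only
  rw [hf1_odd, hf2_even]
  ring

end PDE

theorem hardy_bound {φ₀ : ℝ → ℝ} (hφ : ContDiff ℝ 2 φ₀) (hsupp : support φ₀ ⊆ Icc (-1) 1) :
    ∫ l in Ioc (0:ℝ) 2, (deriv φ₀ l)^2 ≤ 4 * ∫ l in Ioc (0:ℝ) 2, l^2 * (deriv (deriv φ₀) l)^2 := by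
  set f1 := deriv φ₀ with hf1
  set f2 := deriv (deriv φ₀) with hf2
  have hφ' : ContDiff ℝ 1 (deriv φ₀) := by
    have h2 : ContDiff ℝ ((1:ℕ) + 1) φ₀ := by exact_mod_cast hφ
    exact (contDiff_succ_iff_deriv.mp h2).2.2
  have hc1 : Continuous f1 := hφ.continuous_deriv (by norm_num)
  have hc2 : Continuous f2 := hφ'.continuous_deriv le_rfl
  have hd2 : Differentiable ℝ f1 := hφ'.differentiable one_ne_zero
  have hf1_2 : f1 2 = 0 := (support_in_Icc hsupp).1 2 (by norm_num)
  have hderiv : ∀ l ∈ uIcc (0:ℝ) 2,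
      HasDerivAt (fun y => y * f1 y ^ 2) (f1 l^2 + l * (2 * f1 l * f2 l)) l := by
    intro l _
    have hsq : HasDerivAt (fun y => f1 y ^ 2) ((2:ℕ) * f1 l ^ 1 * f2 l) l :=
      ((hd2 l).hasDerivAt).pow 2
    have h := (hasDerivAt_id l).mul hsq
    have heq : (1:ℝ) * f1 l ^ 2 + id l * ((2:ℕ) * f1 l ^ 1 * f2 l)
        = f1 l^2 + l * (2 * f1 l * f2 l) := by push_cast; simp only [id_eq]; ring
    exact heq ▸ h
  have hint : IntervalIntegrable (fun l => f1 l^2 + l * (2 * f1 l * f2 l)) volume 0 2 :=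
    (((hc1.pow 2)).add ((continuous_id.mul ((continuous_const.mul hc1).mul hc2)))).intervalIntegrable 0 2
  have hFTC := intervalIntegral.integral_eq_sub_of_hasDerivAt hderiv hint
  have hXW : (∫ l in (0:ℝ)..2, f1 l^2) + (∫ l in (0:ℝ)..2, l * (2 * f1 l * f2 l)) = 0 := by
    have hA : IntervalIntegrable (fun l : ℝ => f1 l^2) volume 0 2 :=
      ((hc1.pow 2)).intervalIntegrable 0 2
    have hB : IntervalIntegrable (fun l : ℝ => l * (2 * f1 l * f2 l)) volume 0 2 :=
      (continuous_id.mul ((continuous_const.mul hc1).mul hc2)).intervalIntegrable 0 2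
    have hadd := intervalIntegral.integral_add hA hB
    rw [← hadd, hFTC, hf1_2]; ring
  have hmono : (∫ l in (0:ℝ)..2, -(l * (2 * f1 l * f2 l)))
      ≤ ∫ l in (0:ℝ)..2, ((1/2) * f1 l^2 + 2 * (l^2 * f2 l^2)) := by
    apply intervalIntegral.integral_mono_on (by norm_num)
    · exact ((continuous_id.mul ((continuous_const.mul hc1).mul hc2)).neg).intervalIntegrable 0 2
    · exact ((continuous_const.mul (hc1.pow 2)).add
        (continuous_const.mul ((continuous_pow 2).mul (hc2.pow 2)))).intervalIntegrable 0 2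
    · intro l _
      nlinarith [sq_nonneg (f1 l + 2 * l * f2 l)]
  have hsplit : (∫ l in (0:ℝ)..2, ((1/2) * f1 l^2 + 2 * (l^2 * f2 l^2)))
      = (1/2) * (∫ l in (0:ℝ)..2, f1 l^2) + 2 * ∫ l in (0:ℝ)..2, l^2 * f2 l^2 := by
    rw [intervalIntegral.integral_add (f := fun l => (1/2) * f1 l^2) (g := fun l => 2 * (l^2 * f2 l^2)) (by exact (continuous_const.mul (hc1.pow 2)).intervalIntegrable 0 2)
      (by exact (continuous_const.mul ((continuous_pow 2).mul (hc2.pow 2))).intervalIntegrable 0 2),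
      intervalIntegral.integral_const_mul, intervalIntegral.integral_const_mul]
  have hX4K : (∫ l in (0:ℝ)..2, f1 l^2) ≤ 4 * ∫ l in (0:ℝ)..2, l^2 * f2 l^2 := by
    have h1 : (∫ l in (0:ℝ)..2, f1 l^2) = ∫ l in (0:ℝ)..2, -(l * (2 * f1 l * f2 l)) := by
      rw [intervalIntegral.integral_neg]; linarith
    have := h1.le.trans (hmono.trans_eq hsplit)
    linarith
  rw [← intervalIntegral.integral_of_le (by norm_num : (0:ℝ) ≤ 2),
    ← intervalIntegral.integral_of_le (by norm_num : (0:ℝ) ≤ 2)]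
  exact hX4K

theorem g_L2_bound {φ₀ : ℝ → ℝ} (hφ : ContDiff ℝ 2 φ₀) (heven : ∀ x, φ₀ (-x) = φ₀ x)
    (hsupp : support φ₀ ⊆ Icc (-1) 1) :
    ∫ x, (deriv (deriv (fun s => s * φ₀ s)) x)^2
      ≤ 68 * ∫ l in Ioi (0:ℝ), l^2 * (deriv (deriv φ₀) l)^2 := by
  set g := deriv (deriv (fun s => s * φ₀ s)) with hg
  set f1 := deriv φ₀ with hf1
  set f2 := deriv (deriv φ₀) with hf2
  have hφ' : ContDiff ℝ 1 (deriv φ₀) := by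
    have h2 : ContDiff ℝ ((1:ℕ) + 1) φ₀ := by exact_mod_cast hφ
    exact (contDiff_succ_iff_deriv.mp h2).2.2
  have hc1 : Continuous f1 := hφ.continuous_deriv (by norm_num)
  have hc2 : Continuous f2 := hφ'.continuous_deriv le_rfl
  have hcg : Continuous g := g_continuous hφ
  have hgsupp : ∀ x, x ∉ Icc (-1:ℝ) 1 → g x = 0 := (support_in_Icc hsupp).2.2
  have hf2supp : ∀ x, x ∉ Icc (-1:ℝ) 1 → f2 x = 0 := (support_in_Icc hsupp).2.1
  have hgcs : HasCompactSupport g := HasCompactSupport.intro isCompact_Icc hgsupp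
  have hg2cs : HasCompactSupport (fun x => g x ^ 2) :=
    HasCompactSupport.intro isCompact_Icc (fun x hx => by rw [hgsupp x hx]; ring)
  have hint_g2 : Integrable (fun x => g x ^ 2) := (hcg.pow 2).integrable_of_hasCompactSupport hg2cs
  have hintY : Integrable (fun l => l^2 * f2 l ^ 2) := by
    apply ((continuous_pow 2).mul (hc2.pow 2)).integrable_of_hasCompactSupport
    exact HasCompactSupport.intro isCompact_Icc (fun x hx => by show x^2 * f2 x ^ 2 = 0; rw [hf2supp x hx]; ring)
  -- symmetric splitting
  have h1 : (∫ x in Iic (0:ℝ), g x ^2) + (∫ x in Ioi (0:ℝ), g x ^2) = ∫ x, g x ^2 := by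
    have h0 := integral_add_compl (μ := volume) (s := Iic (0:ℝ)) measurableSet_Iic hint_g2
    rwa [compl_Iic] at h0
  have h2 : (∫ x in Iic (0:ℝ), g x ^2) = ∫ x in Ioi (0:ℝ), g x ^2 := by
    have h := integral_comp_neg_Ioi (c := 0) (f := fun x => g x ^ 2)
    rw [neg_zero] at h
    rw [← h]
    apply setIntegral_congr_fun measurableSet_Ioi
    intro x _
    show g (-x) ^ 2 = g x ^ 2
    have hodd := g_odd hφ heven x
    rw [← hg] at hodd
    rw [hodd]
    ring
  -- split Ioi 0 at 2
  have hdecomp : (∫ x in Ioi (0:ℝ), g x ^2)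
      = (∫ x in Ioc (0:ℝ) 2, g x ^2) + ∫ x in Ioi (2:ℝ), g x ^2 := by
    rw [← Ioc_union_Ioi_eq_Ioi (by norm_num : (0:ℝ) ≤ 2)]
    rw [setIntegral_union Ioc_disjoint_Ioi_same measurableSet_Ioi
      hint_g2.integrableOn hint_g2.integrableOn]
  have htail : (∫ x in Ioi (2:ℝ), g x ^2) = 0 := by
    have heq : EqOn (fun x => g x ^2) (fun _ => (0:ℝ)) (Ioi 2) := by
      intro x hx
      have : x ∉ Icc (-1:ℝ) 1 := by
        have : (2:ℝ) < x := hx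
        simp only [mem_Icc, not_and_or]; right; linarith
      simp only
      rw [hgsupp x this]; ring
    rw [setIntegral_congr_fun measurableSet_Ioi heq, integral_zero]
  have hdecompY : (∫ l in Ioi (0:ℝ), l^2 * f2 l ^2)
      = (∫ l in Ioc (0:ℝ) 2, l^2 * f2 l ^2) + ∫ l in Ioi (2:ℝ), l^2 * f2 l ^2 := by
    rw [← Ioc_union_Ioi_eq_Ioi (by norm_num : (0:ℝ) ≤ 2)]
    rw [setIntegral_union Ioc_disjoint_Ioi_same measurableSet_Ioi
      hintY.integrableOn hintY.integrableOn]
  have htailY : (∫ l in Ioi (2:ℝ), l^2 * f2 l ^2) = 0 := by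
    have heq : EqOn (fun l => l^2 * f2 l ^2) (fun _ => (0:ℝ)) (Ioi 2) := by
      intro x hx
      have : x ∉ Icc (-1:ℝ) 1 := by
        have : (2:ℝ) < x := hx
        simp only [mem_Icc, not_and_or]; right; linarith
      simp only
      rw [hf2supp x this]; ring
    rw [setIntegral_congr_fun measurableSet_Ioi heq, integral_zero]
  -- pointwise bound on Ioc 0 2
  have hptw : (∫ x in Ioc (0:ℝ) 2, g x ^2)
      ≤ ∫ x in Ioc (0:ℝ) 2, (8 * f1 x ^2 + 2 * (x^2 * f2 x ^2)) := by
    apply setIntegral_mono_on hint_g2.integrableOn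
    · exact ((continuous_const.mul (hc1.pow 2)).add
        (continuous_const.mul ((continuous_pow 2).mul (hc2.pow 2)))).integrableOn_Ioc
    · exact measurableSet_Ioc
    · intro x _
      have hgx : g x = 2 * f1 x + x * f2 x := by rw [hg, g_formula hφ]
      rw [hgx]
      nlinarith [sq_nonneg (2 * f1 x - x * f2 x)]
  have hsplit2 : (∫ x in Ioc (0:ℝ) 2, (8 * f1 x ^2 + 2 * (x^2 * f2 x ^2)))
      = 8 * (∫ x in Ioc (0:ℝ) 2, f1 x ^2) + 2 * ∫ x in Ioc (0:ℝ) 2, x^2 * f2 x ^2 := by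
    rw [integral_add (f := fun x => 8 * f1 x ^2) (g := fun x => 2 * (x^2 * f2 x ^2)) (by exact (continuous_const.mul (hc1.pow 2)).integrableOn_Ioc)
      (by exact (continuous_const.mul ((continuous_pow 2).mul (hc2.pow 2))).integrableOn_Ioc),
      MeasureTheory.integral_const_mul, MeasureTheory.integral_const_mul]
  have hhardy := hardy_bound hφ hsupp
  have hKnonneg : (0:ℝ) ≤ ∫ x in Ioc (0:ℝ) 2, x^2 * f2 x ^2 :=
    setIntegral_nonneg measurableSet_Ioc (fun x _ => by positivity)
  calc ∫ x, g x ^2 = 2 * ∫ x in Ioi (0:ℝ), g x ^2 := by rw [← h1, h2]; ring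
    _ = 2 * ∫ x in Ioc (0:ℝ) 2, g x ^2 := by rw [hdecomp, htail, add_zero]
    _ ≤ 2 * (8 * (∫ x in Ioc (0:ℝ) 2, f1 x ^2) + 2 * ∫ x in Ioc (0:ℝ) 2, x^2 * f2 x ^2) := by
        have := hptw.trans_eq hsplit2
        linarith
    _ ≤ 68 * ∫ l in Ioc (0:ℝ) 2, l^2 * f2 l ^2 := by linarith
    _ = 68 * ∫ l in Ioi (0:ℝ), l^2 * f2 l ^2 := by rw [hdecompY, htailY, add_zero]

theorem stmt5 (δ : ℝ) (hδ : 0 < δ) :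
    ∃ C > (0:ℝ), ∀ φ₀ : ℝ → ℝ, ContDiff ℝ 2 φ₀ → (∀ x, φ₀ (-x) = φ₀ x) →
      Function.support φ₀ ⊆ Icc (-1) 1 →
      ∀ T : ℝ, 0 < T →
      (∫ t in (0:ℝ)..T,
        ((1 + t) ^ δ * sSup ((fun r => |Phi φ₀ t r|) '' Ioc 0 (t/4 + 1)))^2)
        ≤ C * ∫ l in Ioi (0:ℝ), l^2 * (deriv (deriv φ₀) l)^2 := by
  set κ : ℝ := 4 * ((4:ℝ)^δ)^2 with hκ
  have hκ0 : 0 < κ := by positivity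
  refine ⟨κ * 64 * 68 + 1, by positivity, ?_⟩
  intro φ₀ hφ heven hsupp T hT
  set g := deriv (deriv (fun s => s * φ₀ s)) with hgdef
  set Y := ∫ l in Ioi (0:ℝ), l^2 * (deriv (deriv φ₀) l)^2 with hY
  have hYnn : 0 ≤ Y := setIntegral_nonneg measurableSet_Ioi (fun x _ => by positivity)
  set S : ℝ → ℝ := fun t => sSup ((fun r => |Phi φ₀ t r|) '' Ioc 0 (t/4 + 1)) with hSdef
  have hcg : Continuous g := g_continuous hφ
  have hgsupp : ∀ x, x ∉ Icc (-1:ℝ) 1 → g x = 0 := (support_in_Icc hsupp).2.2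
  have hgcs : HasCompactSupport g := HasCompactSupport.intro isCompact_Icc hgsupp
  have hint_g : Integrable g := hcg.integrable_of_hasCompactSupport hgcs
  have hint_absg : Integrable (fun x => |g x|) := hint_g.abs
  have hg2cs : HasCompactSupport (fun x => g x ^ 2) :=
    HasCompactSupport.intro isCompact_Icc (fun x hx => by rw [hgsupp x hx]; ring)
  have hint_g2 : Integrable (fun x => g x ^ 2) := (hcg.pow 2).integrable_of_hasCompactSupport hg2cs
  obtain ⟨M, hM⟩ := hcg.bounded_above_of_compact_support hgcs
  have hM' : ∀ x, |g x| ≤ M := fun x => by have := hM x; rwa [Real.norm_eq_abs] at this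
  have hM0 : 0 ≤ M := le_trans (abs_nonneg _) (hM' 0)
  set H : ℝ → ℝ≥0∞ := fun u => ENNReal.ofReal |g u| with hHdef
  have hHmeas : Measurable H := hcg.abs.measurable.ennreal_ofReal
  have hHB : ∀ u, H u ≤ ENNReal.ofReal M := fun u => ENNReal.ofReal_le_ofReal (hM' u)
  have hfin : ∫⁻ u, H u ≠ ⊤ := by
    rw [hHdef, ← ofReal_integral_eq_lintegral_ofReal hint_absg
      (ae_of_all _ fun x => abs_nonneg _)]
    exact ENNReal.ofReal_ne_top
  have hmax := maximal_L2 H hHmeas (ENNReal.ofReal M) ENNReal.ofReal_ne_top hHB hfin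
  set p : ℝ → ℝ := fun x => (mfn H x).toReal with hpdef
  have hmfn_top : ∀ x, mfn H x ≠ ⊤ :=
    fun x => ((mfn_le hHB x).trans_lt ENNReal.ofReal_lt_top).ne
  have hp_meas : Measurable p := (measurable_mfn hHmeas hfin).ennreal_toReal
  have hp_nonneg : ∀ x, 0 ≤ p x := fun _ => ENNReal.toReal_nonneg
  have hpB : ∀ x, p x ≤ M := fun x => by
    have h := ENNReal.toReal_mono ENNReal.ofReal_ne_top (mfn_le hHB x)
    rwa [ENNReal.toReal_ofReal hM0] at h
  -- the sup is nonnegative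
  have hSnn : ∀ t, 0 ≤ S t := by
    intro t
    apply Real.sSup_nonneg
    rintro y ⟨r, _, rfl⟩
    exact abs_nonneg _
  -- vanishing for t ≥ 3
  have hS0 : ∀ t : ℝ, 3 ≤ t → S t = 0 := by
    intro t ht
    have hr1 : (0:ℝ) < t/4 + 1 := by linarith
    have hzero : ∀ r ∈ Ioc (0:ℝ) (t/4 + 1), Phi φ₀ t r = 0 := by
      intro r hr
      have hle : t - r ≤ t + r := by linarith [hr.1]
      have heq : EqOn g (fun _ => (0:ℝ)) (uIcc (t - r) (t + r)) := by
        intro x hx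
        rw [uIcc_of_le hle] at hx
        apply hgsupp
        have hx1 : t - r ≤ x := hx.1
        have : (5:ℝ)/4 ≤ t - r := by
          have := hr.2
          linarith
        simp only [mem_Icc, not_and_or]
        right
        intro h
        linarith
      rw [Phi, intervalIntegral.integral_congr heq]
      simp
    have himg : (fun r => |Phi φ₀ t r|) '' Ioc 0 (t/4 + 1) = {0} := by
      apply Set.eq_singleton_iff_nonempty_unique_mem.2
      constructor
      · exact ⟨_, mem_image_of_mem _ (show t/4+1 ∈ Ioc (0:ℝ) (t/4+1) from ⟨hr1, le_refl _⟩)⟩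
      · rintro y ⟨r, hr, rfl⟩
        show |Phi φ₀ t r| = 0
        rw [hzero r hr, abs_zero]
    rw [hSdef]
    simp only
    rw [himg, csSup_singleton]
  -- comparison with the maximal function on [0,3]
  have hS2p : ∀ t : ℝ, 0 ≤ t → t ≤ 3 → S t ≤ 2 * p t := by
    intro t ht0 ht3
    have hr1 : (0:ℝ) < t/4 + 1 := by linarith
    apply csSup_le ⟨_, mem_image_of_mem _ (show t/4+1 ∈ Ioc (0:ℝ) (t/4+1) from ⟨hr1, le_refl _⟩)⟩
    rintro y ⟨r, hr, rfl⟩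
    have hr0 : 0 < r := hr.1
    have hr74 : r ≤ 7/4 := by
      have := hr.2; linarith
    have hle : t - r ≤ t + r := by linarith
    obtain ⟨q, hq1, hq2⟩ := exists_rat_btwn (show r < 2*r by linarith)
    have hq0 : 0 < (q:ℝ) := lt_trans hr0 hq1
    have hq4 : (q:ℝ) ≤ 4 := by linarith
    -- |Phi| ≤ (1/(2r)) ∫_{Ioc} |g|
    have habs : |Phi φ₀ t r| ≤ (1/(2*r)) * ∫ x in Ioc (t - r) (t + r), |g x| := by
      rw [Phi, abs_mul, abs_of_pos (show (0:ℝ) < 1/(2*r) by positivity)]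
      apply mul_le_mul_of_nonneg_left _ (by positivity)
      calc |∫ l in (t - r)..(t + r), g l| ≤ ∫ l in (t - r)..(t + r), |g l| :=
            intervalIntegral.abs_integral_le_integral_abs hle
        _ = ∫ x in Ioc (t - r) (t + r), |g x| := intervalIntegral.integral_of_le hle
    have hmonoset : (∫ x in Ioc (t - r) (t + r), |g x|)
        ≤ ∫ x in Ioc (t - (q:ℝ)) (t + (q:ℝ)), |g x| := by
      apply setIntegral_mono_set hint_absg.integrableOn
        (ae_of_all _ fun x => abs_nonneg _)
      apply HasSubset.Subset.eventuallyLE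
      apply Ioc_subset_Ioc <;> linarith
    have hInn : 0 ≤ ∫ x in Ioc (t - (q:ℝ)) (t + (q:ℝ)), |g x| :=
      setIntegral_nonneg measurableSet_Ioc (fun x _ => abs_nonneg _)
    have hcoef : (1:ℝ)/(2*r) ≤ 2 * (1/(2*(q:ℝ))) := by
      rw [show (2:ℝ) * (1/(2*(q:ℝ))) = 1/(q:ℝ) by field_simp]
      rw [div_le_div_iff₀ (by linarith) hq0]
      nlinarith
    -- connect with mavg
    set I : ℝ := ∫ x in Ioc (t - (q:ℝ)) (t + (q:ℝ)), |g x| with hI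
    have hravg : ENNReal.ofReal ((1/(2*(q:ℝ))) * I) = mavg H (q:ℝ) t := by
      rw [mavg, hHdef, ← ofReal_integral_eq_lintegral_ofReal hint_absg.integrableOn
        (ae_of_all _ fun x => abs_nonneg _)]
      rw [← ENNReal.ofReal_div_of_pos (by positivity)]
      congr 1
      rw [hI]
      ring
    have hravg_le : (1/(2*(q:ℝ))) * I ≤ p t := by
      have h1 : mavg H (q:ℝ) t ≤ mfn H t :=
        le_iSup (fun qq : QI => mavg H (qq.1:ℝ) t) ⟨q, hq0, hq4⟩
      have h2 := ENNReal.toReal_mono (hmfn_top t) (hravg.le.trans h1)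
      rwa [ENNReal.toReal_ofReal (by positivity)] at h2
    calc |Phi φ₀ t r| ≤ (1/(2*r)) * ∫ x in Ioc (t - r) (t + r), |g x| := habs
      _ ≤ (1/(2*r)) * I := mul_le_mul_of_nonneg_left hmonoset (by positivity)
      _ ≤ (2 * (1/(2*(q:ℝ)))) * I := mul_le_mul_of_nonneg_right hcoef hInn
      _ = 2 * ((1/(2*(q:ℝ))) * I) := by ring
      _ ≤ 2 * p t := by linarith [hravg_le]
  -- main case split
  by_cases hw : IntervalIntegrable
    (fun t => ((1 + t) ^ δ * S t)^2) volume 0 T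
  swap
  · rw [intervalIntegral.integral_undef hw]
    positivity
  · -- dominating function
    set b : ℝ → ℝ := fun t => κ * (Icc (0:ℝ) 3).indicator (fun u => p u^2) t with hb
    have hind_int : Integrable ((Icc (0:ℝ) 3).indicator (fun u => p u^2)) := by
      rw [integrable_indicator_iff measurableSet_Icc]
      refine Measure.integrableOn_of_bounded (M := M^2) ?_ ?_ ?_
      · rw [Real.volume_Icc]; exact ENNReal.ofReal_ne_top
      · exact (hp_meas.pow_const 2).aestronglyMeasurable
      · apply ae_of_all
        intro x
        rw [Real.norm_eq_abs, abs_of_nonneg (by positivity)]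
        have := hpB x; have := hp_nonneg x
        nlinarith
    have hbint : IntervalIntegrable b volume 0 T :=
      (hind_int.const_mul κ).intervalIntegrable
    have hptwise : ∀ t ∈ Icc (0:ℝ) T, ((1 + t) ^ δ * S t)^2 ≤ b t := by
      intro t ht
      by_cases ht3 : t ≤ 3
      · have h1 : (1 + t) ^ δ ≤ (4:ℝ)^δ :=
          Real.rpow_le_rpow (by linarith [ht.1]) (by linarith) hδ.le
        have h2 : S t ≤ 2 * p t := hS2p t ht.1 ht3
        have h3 : 0 ≤ (1 + t) ^ δ := Real.rpow_nonneg (by linarith [ht.1]) δ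
        have h4 : ((1 + t) ^ δ * S t)^2 ≤ ((4:ℝ)^δ * (2 * p t))^2 := by
          apply pow_le_pow_left₀ (mul_nonneg h3 (hSnn t))
          exact mul_le_mul h1 h2 (hSnn t) (Real.rpow_nonneg (by norm_num) δ)
        have h5 : ((4:ℝ)^δ * (2 * p t))^2 = κ * p t^2 := by rw [hκ]; ring
        rw [hb]
        simp only
        rw [Set.indicator_of_mem (show t ∈ Icc (0:ℝ) 3 from ⟨ht.1, ht3⟩)]
        linarith
      · rw [hS0 t (by linarith)]
        have : κ * (Icc (0:ℝ) 3).indicator (fun u => p u^2) t ≥ 0 := by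
          apply mul_nonneg hκ0.le
          apply Set.indicator_nonneg
          intro x _; positivity
        simpa using this
    have hstep := intervalIntegral.integral_mono_on hT.le hw hbint hptwise
    -- bound ∫ b
    have hb1 : (∫ t in (0:ℝ)..T, b t)
        = κ * ∫ t in (0:ℝ)..T, (Icc (0:ℝ) 3).indicator (fun u => p u^2) t := by
      rw [hb]; exact intervalIntegral.integral_const_mul κ _
    have hb2 : (∫ t in (0:ℝ)..T, (Icc (0:ℝ) 3).indicator (fun u => p u^2) t)
        ≤ ∫ t, (Icc (0:ℝ) 3).indicator (fun u => p u^2) t := by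
      rw [intervalIntegral.integral_of_le hT.le]
      apply setIntegral_le_integral hind_int
      apply ae_of_all
      intro x
      apply Set.indicator_nonneg
      intro u _; positivity
    have hb3 : (∫ t, (Icc (0:ℝ) 3).indicator (fun u => p u^2) t)
        = ∫ t in Icc (0:ℝ) 3, p t^2 := integral_indicator measurableSet_Icc
    -- lintegral comparison
    have hb4 : (∫ t in Icc (0:ℝ) 3, p t^2) ≤ 64 * ∫ x, g x^2 := by
      have e1 : (∫ t in Icc (0:ℝ) 3, p t^2)
          = (∫⁻ t in Icc (0:ℝ) 3, (mfn H t)^2).toReal := by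
        rw [integral_eq_lintegral_of_nonneg_ae (ae_of_all _ fun x => by positivity)
          ((hp_meas.pow_const 2).aestronglyMeasurable).restrict]
        congr 1
        apply lintegral_congr
        intro x
        rw [hpdef]
        rw [← ENNReal.ofReal_toReal (hmfn_top x), ← ENNReal.ofReal_pow ENNReal.toReal_nonneg]
      have e4 : (∫⁻ x, (H x)^2) = ENNReal.ofReal (∫ x, g x^2) := by
        rw [ofReal_integral_eq_lintegral_ofReal hint_g2 (ae_of_all _ fun x => by positivity)]
        apply lintegral_congr
        intro x
        rw [hHdef, ← ENNReal.ofReal_pow (abs_nonneg _)]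
        simp [sq_abs]
      have e2 : (∫⁻ t in Icc (0:ℝ) 3, (mfn H t)^2) ≤ 64 * ENNReal.ofReal (∫ x, g x^2) := by
        rw [← e4]
        exact (setLIntegral_le_lintegral _ _).trans hmax
      rw [e1]
      have e3 := ENNReal.toReal_mono (by simp [ENNReal.mul_eq_top]) e2
      rw [ENNReal.toReal_mul, ENNReal.toReal_ofReal (integral_nonneg (fun x => by positivity))]
        at e3
      simpa using e3
    have hb5 : (∫ x, g x^2) ≤ 68 * Y := g_L2_bound hφ heven hsupp
    calc (∫ t in (0:ℝ)..T, ((1 + t) ^ δ * S t)^2) ≤ ∫ t in (0:ℝ)..T, b t := hstep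
      _ = κ * ∫ t in (0:ℝ)..T, (Icc (0:ℝ) 3).indicator (fun u => p u^2) t := hb1
      _ ≤ κ * (64 * ∫ x, g x^2) := by
          apply mul_le_mul_of_nonneg_left _ hκ0.le
          calc (∫ t in (0:ℝ)..T, (Icc (0:ℝ) 3).indicator (fun u => p u^2) t)
              ≤ ∫ t in Icc (0:ℝ) 3, p t^2 := hb2.trans_eq hb3
            _ ≤ 64 * ∫ x, g x^2 := hb4
      _ ≤ κ * (64 * (68 * Y)) := by
          apply mul_le_mul_of_nonneg_left _ hκ0.le
          linarith
      _ ≤ (κ * 64 * 68 + 1) * Y := by nlinarith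
end
end

section
/- Let a : ℝ → ℝ be smooth and let u(t,r) be a C² function of (t,r) with t ≥ 0, r > 0, with a(u(t,r)) > 0, satisfying the radial quasi-linear wave equation u_tt = a(u)²(u_rr + (2/r)u_r). Set v = ru, L± = a(u)^{−1/2}∂_t ± a(u)^{1/2}∂_r, and h(u) = a'(u)/(2a(u)). Then the pointwise identities L₊L₋v = −h(u)(L₊u)(L₊v) and L₋L₊v = −h(u)(L₋u)(L₋v) hold for all t ≥ 0, r > 0. -/
open MeasureTheory Real Set Metric Function

noncomputable section

/-- Partial derivative in time of `u(t,r)`. -/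
def pt (u : ℝ → ℝ → ℝ) (t r : ℝ) : ℝ := deriv (fun s => u s r) t

/-- Partial derivative in `r` of `u(t,r)`. -/
def pr (u : ℝ → ℝ → ℝ) (t r : ℝ) : ℝ := deriv (u t) r

/-- `|∂u(t,r)|`, the magnitude of `(u_t, u_r)`. -/
def pd (u : ℝ → ℝ → ℝ) (t r : ℝ) : ℝ := Real.sqrt ((pt u t r)^2 + (pr u t r)^2)

/-- `v = r·u`. -/
def vf (u : ℝ → ℝ → ℝ) : ℝ → ℝ → ℝ := fun t r => r * u t r

/-- The weighted null operator `L₊ = a(u)^{-1/2} ∂_t + a(u)^{1/2} ∂_r`. -/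
def Lp (A : ℝ → ℝ) (u w : ℝ → ℝ → ℝ) : ℝ → ℝ → ℝ := fun t r =>
  pt w t r / Real.sqrt (A (u t r)) + Real.sqrt (A (u t r)) * pr w t r

/-- The weighted null operator `L₋ = a(u)^{-1/2} ∂_t - a(u)^{1/2} ∂_r`. -/
def Lm (A : ℝ → ℝ) (u w : ℝ → ℝ → ℝ) : ℝ → ℝ → ℝ := fun t r =>
  pt w t r / Real.sqrt (A (u t r)) - Real.sqrt (A (u t r)) * pr w t r

/-- Auxiliary: slice derivative in the first coordinate. -/
lemma sliceT {F : ℝ × ℝ → ℝ} {t r : ℝ} (hF : DifferentiableAt ℝ F (t, r)) :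
    HasDerivAt (fun τ => F (τ, r)) (fderiv ℝ F (t, r) (1, 0)) t := by
  have hc : HasDerivAt (fun τ : ℝ => ((τ, r) : ℝ × ℝ)) ((1 : ℝ), (0 : ℝ)) t :=
    (hasDerivAt_id t).prodMk (hasDerivAt_const t r)
  have h := HasFDerivAt.comp_hasDerivAt (f := fun τ : ℝ => ((τ, r) : ℝ × ℝ))
    (x := t) hF.hasFDerivAt hc
  simpa [Function.comp_def] using h

/-- Auxiliary: slice derivative in the second coordinate. -/
lemma sliceR {F : ℝ × ℝ → ℝ} {t r : ℝ} (hF : DifferentiableAt ℝ F (t, r)) :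
    HasDerivAt (fun ρ => F (t, ρ)) (fderiv ℝ F (t, r) (0, 1)) r := by
  have hc : HasDerivAt (fun ρ : ℝ => ((t, ρ) : ℝ × ℝ)) ((0 : ℝ), (1 : ℝ)) r :=
    (hasDerivAt_const r t).prodMk (hasDerivAt_id r)
  have h := HasFDerivAt.comp_hasDerivAt (f := fun ρ : ℝ => ((t, ρ) : ℝ × ℝ))
    (x := r) hF.hasFDerivAt hc
  simpa [Function.comp_def] using h

theorem stmt14 (A : ℝ → ℝ) (hA : ContDiff ℝ (⊤ : ℕ∞) A)
    (u : ℝ → ℝ → ℝ) (hu : ContDiff ℝ 2 (Function.uncurry u))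
    (hpos : ∀ t r, 0 < A (u t r))
    (hpde : ∀ t r, 0 ≤ t → 0 < r →
      pt (pt u) t r = (A (u t r))^2 * (pr (pr u) t r + (2 / r) * pr u t r)) :
    ∀ t r, 0 ≤ t → 0 < r →
      Lp A u (Lm A u (vf u)) t r
        = -(deriv A (u t r) / (2 * A (u t r))) * Lp A u u t r * Lp A u (vf u) t r
      ∧ Lm A u (Lp A u (vf u)) t r
        = -(deriv A (u t r) / (2 * A (u t r))) * Lm A u u t r * Lm A u (vf u) t r := by
  have hU : ContDiff ℝ 2 (Function.uncurry u) := hu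
  have hUd : Differentiable ℝ (Function.uncurry u) := hU.differentiable (by norm_num)
  have hDU : ContDiff ℝ 1 (fderiv ℝ (Function.uncurry u)) :=
    hU.fderiv_right (by norm_num)
  have hDUd : Differentiable ℝ (fderiv ℝ (Function.uncurry u)) := hDU.differentiable one_ne_zero
  have hF1 : ContDiff ℝ 1 (fun p : ℝ × ℝ => fderiv ℝ (Function.uncurry u) p (1, 0)) :=
    hDU.clm_apply contDiff_const
  have hF2 : ContDiff ℝ 1 (fun p : ℝ × ℝ => fderiv ℝ (Function.uncurry u) p (0, 1)) :=
    hDU.clm_apply contDiff_const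
  -- slices of u itself
  have hUT : ∀ t r : ℝ, HasDerivAt (fun τ => u τ r)
      (fderiv ℝ (Function.uncurry u) (t, r) (1, 0)) t := fun t r =>
    sliceT (hUd (t, r))
  have hUR : ∀ t r : ℝ, HasDerivAt (fun ρ => u t ρ)
      (fderiv ℝ (Function.uncurry u) (t, r) (0, 1)) r := fun t r =>
    sliceR (hUd (t, r))
  -- global identities for first partials
  have hpt_u : ∀ t r : ℝ, pt u t r = fderiv ℝ (Function.uncurry u) (t, r) (1, 0) :=
    fun t r => (hUT t r).deriv
  have hpr_u : ∀ t r : ℝ, pr u t r = fderiv ℝ (Function.uncurry u) (t, r) (0, 1) :=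
    fun t r => (hUR t r).deriv
  have hpt_v : ∀ t r : ℝ, pt (vf u) t r = r * fderiv ℝ (Function.uncurry u) (t, r) (1, 0) := by
    intro t r
    have h := (hUT t r).const_mul r
    exact h.deriv
  have hpr_v : ∀ t r : ℝ, pr (vf u) t r
      = u t r + r * fderiv ℝ (Function.uncurry u) (t, r) (0, 1) := by
    intro t r
    have h := (hasDerivAt_id r).mul (hUR t r)
    have h2 : HasDerivAt (fun ρ => ρ * u t ρ)
        (u t r + r * fderiv ℝ (Function.uncurry u) (t, r) (0, 1)) r := by
      simpa [one_mul, Pi.mul_def, Pi.add_def] using h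
    exact h2.deriv
  intro t r ht hr
  have hApos := hpos t r
  have hAne : A (u t r) ≠ 0 := ne_of_gt hApos
  have hspos : 0 < Real.sqrt (A (u t r)) := Real.sqrt_pos.2 hApos
  have hsne : Real.sqrt (A (u t r)) ≠ 0 := ne_of_gt hspos
  have hrne : r ≠ 0 := ne_of_gt hr
  have hs2 : Real.sqrt (A (u t r)) ^ 2 = A (u t r) := Real.sq_sqrt hApos.le
  -- second derivatives
  set f'' := fderiv ℝ (fderiv ℝ (Function.uncurry u)) (t, r) with hf''def
  have hsymm : f'' ((1:ℝ), (0:ℝ)) ((0:ℝ), (1:ℝ)) = f'' ((0:ℝ), (1:ℝ)) ((1:ℝ), (0:ℝ)) :=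
    second_derivative_symmetric (fun y => (hUd y).hasFDerivAt)
      ((hDUd (t, r)).hasFDerivAt) _ _
  -- derivatives of the partial-derivative fields
  have hclm1 := ((hDUd (t, r)).hasFDerivAt.clm_apply
    (hasFDerivAt_const (((1:ℝ), (0:ℝ)) : ℝ × ℝ) ((t, r) : ℝ × ℝ)))
  have hclm2 := ((hDUd (t, r)).hasFDerivAt.clm_apply
    (hasFDerivAt_const (((0:ℝ), (1:ℝ)) : ℝ × ℝ) ((t, r) : ℝ × ℝ)))
  have hf1T : HasDerivAt (fun τ => fderiv ℝ (Function.uncurry u) (τ, r) (1, 0))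
      (f'' (1, 0) (1, 0)) t := by
    have hd1 : fderiv ℝ (fun p : ℝ × ℝ => fderiv ℝ (Function.uncurry u) p (1, 0)) (t, r)
        = (fderiv ℝ (Function.uncurry u) (t, r)).comp (0 : (ℝ × ℝ) →L[ℝ] (ℝ × ℝ))
          + f''.flip (1, 0) := hclm1.fderiv
    have h := sliceT ((hF1.differentiable one_ne_zero) (t, r))
    rw [hd1] at h
    simpa using h
  have hf1R : HasDerivAt (fun ρ => fderiv ℝ (Function.uncurry u) (t, ρ) (1, 0))
      (f'' (0, 1) (1, 0)) r := by
    have hd1 : fderiv ℝ (fun p : ℝ × ℝ => fderiv ℝ (Function.uncurry u) p (1, 0)) (t, r)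
        = (fderiv ℝ (Function.uncurry u) (t, r)).comp (0 : (ℝ × ℝ) →L[ℝ] (ℝ × ℝ))
          + f''.flip (1, 0) := hclm1.fderiv
    have h := sliceR ((hF1.differentiable one_ne_zero) (t, r))
    rw [hd1] at h
    simpa using h
  have hf2T : HasDerivAt (fun τ => fderiv ℝ (Function.uncurry u) (τ, r) (0, 1))
      (f'' (0, 1) (1, 0)) t := by
    have hd2 : fderiv ℝ (fun p : ℝ × ℝ => fderiv ℝ (Function.uncurry u) p (0, 1)) (t, r)
        = (fderiv ℝ (Function.uncurry u) (t, r)).comp (0 : (ℝ × ℝ) →L[ℝ] (ℝ × ℝ))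
          + f''.flip (0, 1) := hclm2.fderiv
    have h := sliceT ((hF2.differentiable one_ne_zero) (t, r))
    rw [hd2] at h
    rw [← hsymm]
    simpa using h
  have hf2R : HasDerivAt (fun ρ => fderiv ℝ (Function.uncurry u) (t, ρ) (0, 1))
      (f'' (0, 1) (0, 1)) r := by
    have hd2 : fderiv ℝ (fun p : ℝ × ℝ => fderiv ℝ (Function.uncurry u) p (0, 1)) (t, r)
        = (fderiv ℝ (Function.uncurry u) (t, r)).comp (0 : (ℝ × ℝ) →L[ℝ] (ℝ × ℝ))
          + f''.flip (0, 1) := hclm2.fderiv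
    have h := sliceR ((hF2.differentiable one_ne_zero) (t, r))
    rw [hd2] at h
    simpa using h
  -- abbreviations
  set s := Real.sqrt (A (u t r)) with hsdef
  set a' := deriv A (u t r) with ha'def
  set ut := fderiv ℝ (Function.uncurry u) (t, r) ((1:ℝ), (0:ℝ)) with hutdef
  set ur := fderiv ℝ (Function.uncurry u) (t, r) ((0:ℝ), (1:ℝ)) with hurdef
  set utt := f'' ((1:ℝ), (0:ℝ)) ((1:ℝ), (0:ℝ)) with huttdef
  set utr := f'' ((0:ℝ), (1:ℝ)) ((1:ℝ), (0:ℝ)) with hutrdef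
  set urr := f'' ((0:ℝ), (1:ℝ)) ((0:ℝ), (1:ℝ)) with hurrdef
  -- the PDE in these terms
  have hPDE : utt = (s ^ 2) ^ 2 * (urr + 2 / r * ur) := by
    have h1 : pt (pt u) t r = utt := by
      have : (fun τ => pt u τ r) = fun τ => fderiv ℝ (Function.uncurry u) (τ, r) (1, 0) := by
        funext τ; exact hpt_u τ r
      rw [pt, this]; exact hf1T.deriv
    have h2 : pr (pr u) t r = urr := by
      have : (fun ρ => pr u t ρ) = fun ρ => fderiv ℝ (Function.uncurry u) (t, ρ) (0, 1) := by
        funext ρ; exact hpr_u t ρ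
      rw [pr]
      show deriv (fun ρ => pr u t ρ) r = urr
      rw [this]; exact hf2R.deriv
    have := hpde t r ht hr
    rw [h1, h2, hpr_u t r] at this
    rw [← hs2] at this
    exact this
  -- derivative of A ∘ u along slices
  have hAT : HasDerivAt (fun τ => A (u τ r)) (a' * ut) t := by
    have h := ((hA.differentiable (by simp) (u t r)).hasDerivAt).comp t (hUT t r)
    simpa [Function.comp_def] using h
  have hAR : HasDerivAt (fun ρ => A (u t ρ)) (a' * ur) r := by
    have h := ((hA.differentiable (by simp) (u t r)).hasDerivAt).comp r (hUR t r)
    simpa [Function.comp_def] using h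
  have hST : HasDerivAt (fun τ => Real.sqrt (A (u τ r))) (a' * ut / (2 * s)) t :=
    hAT.sqrt hAne
  have hSR : HasDerivAt (fun ρ => Real.sqrt (A (u t ρ))) (a' * ur / (2 * s)) r :=
    hAR.sqrt hAne
  -- t-slice of  Lm A u (vf u)  and  Lp A u (vf u)
  have hvtT : HasDerivAt (fun τ => r * fderiv ℝ (Function.uncurry u) (τ, r) (1, 0))
      (r * utt) t := hf1T.const_mul r
  have hvrT : HasDerivAt
      (fun τ => u τ r + r * fderiv ℝ (Function.uncurry u) (τ, r) (0, 1))
      (ut + r * utr) t := (hUT t r).add (hf2T.const_mul r)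
  have hvtR : HasDerivAt (fun ρ => ρ * fderiv ℝ (Function.uncurry u) (t, ρ) (1, 0))
      (ut + r * utr) r := by
    have h := (hasDerivAt_id r).mul hf1R
    have : 1 * fderiv ℝ (Function.uncurry u) (t, r) ((1:ℝ), (0:ℝ)) + r * utr = ut + r * utr := by
      rw [one_mul]
    simpa [this, Pi.mul_def] using h
  have hvrR : HasDerivAt
      (fun ρ => u t ρ + ρ * fderiv ℝ (Function.uncurry u) (t, ρ) (0, 1))
      (ur + (ur + r * urr)) r := by
    have h := (hUR t r).add ((hasDerivAt_id r).mul hf2R)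
    simpa [one_mul, Pi.mul_def, Pi.add_def] using h
  -- now the four derivatives of the composites
  have hLmfun : ∀ t' r' : ℝ, Lm A u (vf u) t' r'
      = (r' * fderiv ℝ (Function.uncurry u) (t', r') (1, 0)) / Real.sqrt (A (u t' r'))
        - Real.sqrt (A (u t' r'))
          * (u t' r' + r' * fderiv ℝ (Function.uncurry u) (t', r') (0, 1)) := by
    intro t' r'
    rw [Lm, hpt_v t' r', hpr_v t' r']
  have hLpfun : ∀ t' r' : ℝ, Lp A u (vf u) t' r'
      = (r' * fderiv ℝ (Function.uncurry u) (t', r') (1, 0)) / Real.sqrt (A (u t' r'))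
        + Real.sqrt (A (u t' r'))
          * (u t' r' + r' * fderiv ℝ (Function.uncurry u) (t', r') (0, 1)) := by
    intro t' r'
    rw [_root_.Lp, hpt_v t' r', hpr_v t' r']
  have hptLm : pt (Lm A u (vf u)) t r
      = (r * utt * s - r * ut * (a' * ut / (2 * s))) / s ^ 2
        - ((a' * ut / (2 * s)) * (u t r + r * ur) + s * (ut + r * utr)) := by
    have hfun : (fun τ => Lm A u (vf u) τ r)
        = fun τ => (r * fderiv ℝ (Function.uncurry u) (τ, r) (1, 0)) / Real.sqrt (A (u τ r))
          - Real.sqrt (A (u τ r))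
            * (u τ r + r * fderiv ℝ (Function.uncurry u) (τ, r) (0, 1)) := by
      funext τ; exact hLmfun τ r
    rw [pt, hfun]
    exact ((hvtT.div hST hsne).sub (hST.mul hvrT)).deriv
  have hprLm : pr (Lm A u (vf u)) t r
      = ((ut + r * utr) * s - r * ut * (a' * ur / (2 * s))) / s ^ 2
        - ((a' * ur / (2 * s)) * (u t r + r * ur) + s * (ur + (ur + r * urr))) := by
    have hfun : (fun ρ => Lm A u (vf u) t ρ)
        = fun ρ => (ρ * fderiv ℝ (Function.uncurry u) (t, ρ) (1, 0)) / Real.sqrt (A (u t ρ))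
          - Real.sqrt (A (u t ρ))
            * (u t ρ + ρ * fderiv ℝ (Function.uncurry u) (t, ρ) (0, 1)) := by
      funext ρ; exact hLmfun t ρ
    rw [pr]
    show deriv (fun ρ => Lm A u (vf u) t ρ) r = _
    rw [hfun]
    exact ((hvtR.div hSR hsne).sub (hSR.mul hvrR)).deriv
  have hptLp : pt (Lp A u (vf u)) t r
      = (r * utt * s - r * ut * (a' * ut / (2 * s))) / s ^ 2
        + ((a' * ut / (2 * s)) * (u t r + r * ur) + s * (ut + r * utr)) := by
    have hfun : (fun τ => Lp A u (vf u) τ r)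
        = fun τ => (r * fderiv ℝ (Function.uncurry u) (τ, r) (1, 0)) / Real.sqrt (A (u τ r))
          + Real.sqrt (A (u τ r))
            * (u τ r + r * fderiv ℝ (Function.uncurry u) (τ, r) (0, 1)) := by
      funext τ; exact hLpfun τ r
    rw [pt, hfun]
    exact ((hvtT.div hST hsne).add (hST.mul hvrT)).deriv
  have hprLp : pr (Lp A u (vf u)) t r
      = ((ut + r * utr) * s - r * ut * (a' * ur / (2 * s))) / s ^ 2
        + ((a' * ur / (2 * s)) * (u t r + r * ur) + s * (ur + (ur + r * urr))) := by
    have hfun : (fun ρ => _root_.Lp A u (vf u) t ρ)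
        = fun ρ => (ρ * fderiv ℝ (Function.uncurry u) (t, ρ) (1, 0)) / Real.sqrt (A (u t ρ))
          + Real.sqrt (A (u t ρ))
            * (u t ρ + ρ * fderiv ℝ (Function.uncurry u) (t, ρ) (0, 1)) := by
      funext ρ; exact hLpfun t ρ
    rw [pr]
    show deriv (fun ρ => _root_.Lp A u (vf u) t ρ) r = _
    rw [hfun]
    exact ((hvtR.div hSR hsne).add (hSR.mul hvrR)).deriv
  constructor
  · rw [_root_.Lp, hptLm, hprLm]
    rw [show _root_.Lp A u u t r = ut / s + s * ur by rw [_root_.Lp, hpt_u t r, hpr_u t r]]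
    rw [hLpfun t r]
    rw [show A (u t r) = s ^ 2 from hs2.symm, hPDE]
    rw [Real.sqrt_sq hspos.le]
    field_simp
    ring
  · rw [Lm, hptLp, hprLp]
    rw [show Lm A u u t r = ut / s - s * ur by rw [Lm, hpt_u t r, hpr_u t r]]
    rw [hLmfun t r]
    rw [show A (u t r) = s ^ 2 from hs2.symm, hPDE]
    rw [Real.sqrt_sq hspos.le]
    field_simp
    ring
end
end
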